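/- arXiv:1303.1401 — 4 statements merged into one kernel-verified Lean document; each statement's English description precedes it below -/
import Mathlib

section
/- Let H be a real Hilbert space and let F : ℝ → (H →L[ℝ] H) be a family of bounded symmetric operators which is differentiable at s₀ with derivative F'. Let λ : ℝ → ℝ and x : ℝ → H be differentiable at s₀ and suppose that F(s) x(s) = λ(s) • x(s) for all s in a neighborhood of s₀ and that ‖x(s₀)‖ = 1. Then the derivative of λ at s₀ equals ⟪F'(x(s₀)), x(s₀)⟫, i.e. λ'(s₀) = ⟨F'(s₀) x(s₀), x(s₀)⟩. -/
open scoped RealInnerProductSpace InnerProductSpace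

/-! Differentiating the eigen-equation `F s (x s) = λ s • x s` at `s₀` and pairing with `x s₀`,
symmetry of `F s₀` turns `⟪F s₀ x', x s₀⟫` into `λ s₀ ⟪x', x s₀⟫`, which cancels, and
`⟪x s₀, x s₀⟫ = 1` leaves `λ' = ⟪F' (x s₀), x s₀⟫`. -/

theorem LinearMap.IsSymmetric.inner_map_eq_mul_of_map_eq_smul {𝕜 E : Type*} [RCLike 𝕜]
    [NormedAddCommGroup E] [InnerProductSpace 𝕜 E] {T : E →ₗ[𝕜] E} (hT : T.IsSymmetric)
    {u : E} {μ : 𝕜} (hu : T u = μ • u) (v : E) : ⟪T v, u⟫_𝕜 = μ * ⟪v, u⟫_𝕜 := by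
  rw [hT, hu, inner_smul_right]

theorem HasDerivAt.clm_apply_eq_smul {𝕜 E : Type*} [NontriviallyNormedField 𝕜]
    [NormedAddCommGroup E] [NormedSpace 𝕜 E] {F : 𝕜 → E →L[𝕜] E} {F' : E →L[𝕜] E}
    {lam : 𝕜 → 𝕜} {lam' : 𝕜} {x : 𝕜 → E} {x' : E} {s₀ : 𝕜}
    (hF : HasDerivAt F F' s₀) (hlam : HasDerivAt lam lam' s₀) (hx : HasDerivAt x x' s₀)
    (heig : ∀ᶠ s in nhds s₀, F s (x s) = lam s • x s) :
    F' (x s₀) + F s₀ x' = lam s₀ • x' + lam' • x s₀ :=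
  (hF.clm_apply hx).unique ((hlam.smul hx).congr_of_eventuallyEq heig)

theorem eigenvalue_variation_general
    {H : Type*} [NormedAddCommGroup H] [InnerProductSpace ℝ H]
    (F : ℝ → (H →L[ℝ] H)) (F' : H →L[ℝ] H) (s₀ : ℝ)
    (hFsymm : ∀ s : ℝ, ∀ u v : H, ⟪F s u, v⟫ = ⟪u, F s v⟫)
    (hF : HasDerivAt F F' s₀)
    (lam : ℝ → ℝ) (lam' : ℝ) (hlam : HasDerivAt lam lam' s₀)
    (x : ℝ → H) (x' : H) (hx : HasDerivAt x x' s₀)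
    (heig : ∀ᶠ s in nhds s₀, F s (x s) = lam s • x s)
    (hnorm : ‖x s₀‖ = 1) :
    lam' = ⟪F' (x s₀), x s₀⟫ := by
  have hderiv := congrArg (⟪·, x s₀⟫) (hF.clm_apply_eq_smul hlam hx heig)
  have hsymm : ⟪F s₀ x', x s₀⟫ = lam s₀ * ⟪x', x s₀⟫ :=
    LinearMap.IsSymmetric.inner_map_eq_mul_of_map_eq_smul (T := (F s₀ : H →ₗ[ℝ] H))
      (hFsymm s₀) heig.self_of_nhds x'
  simp only [inner_add_left, real_inner_smul_left, real_inner_self_eq_norm_sq, hnorm,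
    hsymm] at hderiv
  linarith

/-- Variation of eigenvalues along a differentiable path of bounded symmetric
operators on a real Hilbert space: if `F s (x s) = λ s • x s` near `s₀` and
`‖x s₀‖ = 1`, then `λ'(s₀) = ⟪F'(s₀) (x s₀), x s₀⟫`. -/
theorem eigenvalue_variation
    {H : Type*} [NormedAddCommGroup H] [InnerProductSpace ℝ H] [CompleteSpace H]
    (F : ℝ → (H →L[ℝ] H)) (F' : H →L[ℝ] H) (s₀ : ℝ)
    (hFsymm : ∀ s : ℝ, ∀ u v : H, ⟪F s u, v⟫ = ⟪u, F s v⟫)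
    (hF : HasDerivAt F F' s₀)
    (lam : ℝ → ℝ) (lam' : ℝ) (hlam : HasDerivAt lam lam' s₀)
    (x : ℝ → H) (x' : H) (hx : HasDerivAt x x' s₀)
    (heig : ∀ᶠ s in nhds s₀, F s (x s) = lam s • x s)
    (hnorm : ‖x s₀‖ = 1) :
    lam' = ⟪F' (x s₀), x s₀⟫ :=
  eigenvalue_variation_general F F' s₀ hFsymm hF lam lam' hlam x x' hx heig hnorm
end

section
/- Let δ > 0 and a ∈ ℝ. Let f : ℝ → ℝ be twice differentiable on [a,∞), nonnegative on [a,∞), bounded above on [a,∞), and satisfy the differential inequality f''(s) ≥ δ² f(s) for all s ≥ a. Then f decays exponentially: for every s ≥ a one has f(s) ≤ f(a) · exp(−δ (s − a)). -/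
/-!
With `g = f' + δ f` the inequality `f'' ≥ δ² f` reads `g' ≥ δ g`, so `g e^{-δ s}` is nondecreasing.
If `g` were positive somewhere it would grow exponentially, forcing `f' = g - δ f` and then `f` to
infinity, against boundedness. Hence `(f e^{δ s})' = g e^{δ s} ≤ 0`, which is the decay estimate.
-/

open Real Set Filter

section IntegratingFactor

variable {u u' : ℝ → ℝ} {a : ℝ}

theorem monotoneOn_Ici_of_hasDerivAt_nonneg (hu : ∀ s, a ≤ s → HasDerivAt u (u' s) s)
    (h : ∀ s, a ≤ s → 0 ≤ u' s) : MonotoneOn u (Ici a) :=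
  monotoneOn_of_hasDerivWithinAt_nonneg (convex_Ici a)
    (fun s hs => (hu s hs).continuousAt.continuousWithinAt)
    (fun s hs => (hu s (interior_subset hs)).hasDerivWithinAt)
    (fun s hs => h s (interior_subset hs))

theorem antitoneOn_Ici_of_hasDerivAt_nonpos (hu : ∀ s, a ≤ s → HasDerivAt u (u' s) s)
    (h : ∀ s, a ≤ s → u' s ≤ 0) : AntitoneOn u (Ici a) :=
  antitoneOn_of_hasDerivWithinAt_nonpos (convex_Ici a)
    (fun s hs => (hu s hs).continuousAt.continuousWithinAt)
    (fun s hs => (hu s (interior_subset hs)).hasDerivWithinAt)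
    (fun s hs => h s (interior_subset hs))

theorem hasDerivAt_mul_exp_const_mul {v c s : ℝ} (hu : HasDerivAt u v s) :
    HasDerivAt (fun t => u t * exp (c * t)) ((v + c * u s) * exp (c * s)) s := by
  have hexp : HasDerivAt (fun t => exp (c * t)) (exp (c * s) * c) s := by
    simpa using ((hasDerivAt_id s).const_mul c).exp
  exact (hu.mul hexp).congr_deriv (by ring)

theorem monotoneOn_Ici_mul_exp {c : ℝ} (hu : ∀ s, a ≤ s → HasDerivAt u (u' s) s)
    (h : ∀ s, a ≤ s → 0 ≤ u' s + c * u s) :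
    MonotoneOn (fun t => u t * exp (c * t)) (Ici a) :=
  monotoneOn_Ici_of_hasDerivAt_nonneg (fun s hs => hasDerivAt_mul_exp_const_mul (hu s hs))
    (fun s hs => mul_nonneg (h s hs) (exp_pos _).le)

theorem antitoneOn_Ici_mul_exp {c : ℝ} (hu : ∀ s, a ≤ s → HasDerivAt u (u' s) s)
    (h : ∀ s, a ≤ s → u' s + c * u s ≤ 0) :
    AntitoneOn (fun t => u t * exp (c * t)) (Ici a) :=
  antitoneOn_Ici_of_hasDerivAt_nonpos (fun s hs => hasDerivAt_mul_exp_const_mul (hu s hs))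
    (fun s hs => mul_nonpos_of_nonpos_of_nonneg (h s hs) (exp_pos _).le)

end IntegratingFactor

theorem tendsto_atTop_of_hasDerivAt_of_tendsto_atTop {u u' : ℝ → ℝ} {a : ℝ}
    (hu : ∀ s, a ≤ s → HasDerivAt u (u' s) s) (h : Tendsto u' atTop atTop) :
    Tendsto u atTop atTop := by
  obtain ⟨b, hb⟩ := eventually_atTop.1 (h.eventually_ge_atTop 1)
  have hmono : MonotoneOn (fun t => u t - t) (Ici (max a b)) :=
    monotoneOn_Ici_of_hasDerivAt_nonneg
      (fun s hs => (hu s ((le_max_left a b).trans hs)).sub (hasDerivAt_id s))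
      (fun s hs => sub_nonneg.2 (hb s ((le_max_right a b).trans hs)))
  refine tendsto_atTop_mono' _ ?_
    (tendsto_atTop_add_const_left _ (u (max a b) - max a b) tendsto_id)
  filter_upwards [eventually_ge_atTop (max a b)] with s hs
  have := hmono self_mem_Ici hs hs
  simp only [id] at this ⊢
  linarith

theorem tendsto_atTop_of_monotoneOn_mul_exp_neg {u : ℝ → ℝ} {a c s₀ : ℝ} (hc : 0 < c)
    (hmono : MonotoneOn (fun t => u t * exp (-c * t)) (Ici a)) (hs₀ : a ≤ s₀)
    (hpos : 0 < u s₀) : Tendsto u atTop atTop := by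
  set K := u s₀ * exp (-c * s₀)
  have hK : 0 < K := mul_pos hpos (exp_pos _)
  refine tendsto_atTop_mono' _ ?_
    ((tendsto_exp_atTop.comp (tendsto_id.const_mul_atTop hc)).const_mul_atTop hK)
  filter_upwards [eventually_ge_atTop s₀] with s hs
  have hKs : K ≤ u s * exp (-c * s) := hmono (mem_Ici.2 hs₀) (mem_Ici.2 (hs₀.trans hs)) hs
  calc K * exp (c * s) ≤ u s * exp (-c * s) * exp (c * s) :=
        mul_le_mul_of_nonneg_right hKs (exp_pos _).le
    _ = u s := by rw [mul_assoc, ← exp_add]; simp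

theorem deriv_add_mul_nonpos_of_bddAbove {δ a : ℝ} (hδ : 0 < δ) {f f' f'' : ℝ → ℝ}
    (hf' : ∀ s, a ≤ s → HasDerivAt f (f' s) s)
    (hf'' : ∀ s, a ≤ s → HasDerivAt f' (f'' s) s)
    (hbdd : ∃ M : ℝ, ∀ s, a ≤ s → f s ≤ M)
    (hineq : ∀ s, a ≤ s → δ ^ 2 * f s ≤ f'' s) :
    ∀ s, a ≤ s → f' s + δ * f s ≤ 0 := by
  obtain ⟨M, hM⟩ := hbdd
  by_contra! ⟨s₀, hs₀, hpos⟩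
  have hg : MonotoneOn (fun t => (f' t + δ * f t) * exp (-δ * t)) (Ici a) :=
    monotoneOn_Ici_mul_exp (fun s hs => (hf'' s hs).add ((hf' s hs).const_mul δ))
      (fun s hs => by linarith [hineq s hs])
  have hf'_top : Tendsto f' atTop atTop := by
    refine tendsto_atTop_mono' _ ?_ (tendsto_atTop_add_const_right _ (-(δ * M))
      (tendsto_atTop_of_monotoneOn_mul_exp_neg hδ hg hs₀ hpos))
    filter_upwards [eventually_ge_atTop a] with s hs
    linarith [mul_le_mul_of_nonneg_left (hM s hs) hδ.le]
  obtain ⟨s, hs_big, hs⟩ := ((tendsto_atTop_of_hasDerivAt_of_tendsto_atTop hf' hf'_top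
    |>.eventually_gt_atTop M).and (eventually_ge_atTop a)).exists
  linarith [hM s hs]

theorem exp_decay_of_diff_ineq_general
    (δ a : ℝ) (hδ : 0 < δ) (f f' f'' : ℝ → ℝ)
    (hf' : ∀ s, a ≤ s → HasDerivAt f (f' s) s)
    (hf'' : ∀ s, a ≤ s → HasDerivAt f' (f'' s) s)
    (hbdd : ∃ M : ℝ, ∀ s, a ≤ s → f s ≤ M)
    (hineq : ∀ s, a ≤ s → δ ^ 2 * f s ≤ f'' s) :
    ∀ s, a ≤ s → f s ≤ f a * Real.exp (-δ * (s - a)) := by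
  intro s hs
  have hanti : AntitoneOn (fun t => f t * exp (δ * t)) (Ici a) :=
    antitoneOn_Ici_mul_exp hf' (deriv_add_mul_nonpos_of_bddAbove hδ hf' hf'' hbdd hineq)
  calc f s = f s * exp (δ * s) * exp (-δ * s) := by rw [mul_assoc, ← exp_add]; simp
    _ ≤ f a * exp (δ * a) * exp (-δ * s) :=
        mul_le_mul_of_nonneg_right (hanti self_mem_Ici hs hs) (exp_pos _).le
    _ = f a * exp (-δ * (s - a)) := by rw [mul_assoc, ← exp_add]; ring_nf

/-- Exponential decay: if `f` is twice differentiable on `[a,∞)`, nonnegative and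
bounded above there, and satisfies `f'' ≥ δ² f`, then
`f s ≤ f a * exp (-δ (s - a))` for all `s ≥ a`. -/
theorem exp_decay_of_diff_ineq
    (δ a : ℝ) (hδ : 0 < δ) (f f' f'' : ℝ → ℝ)
    (hf' : ∀ s, a ≤ s → HasDerivAt f (f' s) s)
    (hf'' : ∀ s, a ≤ s → HasDerivAt f' (f'' s) s)
    (hnonneg : ∀ s, a ≤ s → 0 ≤ f s)
    (hbdd : ∃ M : ℝ, ∀ s, a ≤ s → f s ≤ M)
    (hineq : ∀ s, a ≤ s → δ ^ 2 * f s ≤ f'' s) :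
    ∀ s, a ≤ s → f s ≤ f a * Real.exp (-δ * (s - a)) :=
  exp_decay_of_diff_ineq_general δ a hδ f f' f'' hf' hf'' hbdd hineq
end

section
/- Let δ > 0 and a ∈ ℝ. Let f : ℝ → ℝ be twice differentiable on [a,∞), nonnegative on [a,∞), bounded above on [a,∞), and satisfy f''(s) ≥ δ² f(s) for all s ≥ a. Then f'(s) + δ f(s) ≤ 0 for every s ≥ a. -/
/-! With `g = f' + δ f`, the inequality `f'' ≥ δ² f` reads `g' ≥ δ g`, so `e^{-δ s} g` is
nondecreasing. If `g` were positive at some point it would therefore grow like `e^{δ s}`; as `f` is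
bounded, `f' = g - δ f` would tend to `∞`, and then so would `f`. -/

open Real Filter Set

lemma monotoneOn_Ici_of_hasDerivAt_nonneg_s2 {f f' : ℝ → ℝ} {a : ℝ}
    (hf : ∀ x, a ≤ x → HasDerivAt f (f' x) x) (hf'₀ : ∀ x, a ≤ x → 0 ≤ f' x) :
    MonotoneOn f (Ici a) :=
  monotoneOn_of_hasDerivWithinAt_nonneg (convex_Ici a)
    (fun x hx => (hf x hx).continuousAt.continuousWithinAt)
    (fun x hx => (hf x (interior_subset hx)).hasDerivWithinAt)
    (fun x hx => hf'₀ x (interior_subset hx))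

section GrowthOfSupersolutions

variable {g g' : ℝ → ℝ} {a δ : ℝ}

lemma mul_exp_le_of_mul_le_deriv (hg : ∀ x, a ≤ x → HasDerivAt g (g' x) x)
    (hle : ∀ x, a ≤ x → δ * g x ≤ g' x) {x : ℝ} (hx : a ≤ x) :
    g a * exp (δ * (x - a)) ≤ g x := by
  have hderiv : ∀ y, a ≤ y → HasDerivAt (fun y => exp (-(δ * y)) * g y)
      (exp (-(δ * y)) * (g' y - δ * g y)) y := fun y hy =>
    (((hasDerivAt_id y).const_mul δ).neg.exp.mul (hg y hy)).congr_deriv (by simp only [Pi.neg_apply, id_eq]; ring)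
  have hmono := monotoneOn_Ici_of_hasDerivAt_nonneg_s2 hderiv
    (fun y hy => mul_nonneg (exp_pos _).le (sub_nonneg.2 (hle y hy)))
  calc g a * exp (δ * (x - a)) = exp (δ * x) * (exp (-(δ * a)) * g a) := by
        rw [mul_sub, sub_eq_add_neg, exp_add]; ring
    _ ≤ exp (δ * x) * (exp (-(δ * x)) * g x) :=
        mul_le_mul_of_nonneg_left (hmono self_mem_Ici hx hx) (exp_pos _).le
    _ = g x := by rw [← mul_assoc, ← exp_add, add_neg_cancel, exp_zero, one_mul]

lemma tendsto_atTop_of_mul_le_deriv (hδ : 0 < δ) (hga : 0 < g a)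
    (hg : ∀ x, a ≤ x → HasDerivAt g (g' x) x) (hle : ∀ x, a ≤ x → δ * g x ≤ g' x) :
    Tendsto g atTop atTop := by
  have hexp : Tendsto (fun x => g a * exp (δ * (x - a))) atTop atTop :=
    (tendsto_exp_atTop.comp ((tendsto_atTop_add_const_right _ (-a) tendsto_id).const_mul_atTop
      hδ)).const_mul_atTop hga
  refine tendsto_atTop_mono' atTop ?_ hexp
  filter_upwards [eventually_ge_atTop a] with x hx
  exact mul_exp_le_of_mul_le_deriv hg hle hx

end GrowthOfSupersolutions

lemma tendsto_atTop_of_tendsto_deriv {f f' : ℝ → ℝ} {a : ℝ}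
    (hf : ∀ x, a ≤ x → HasDerivAt f (f' x) x) (hf' : Tendsto f' atTop atTop) :
    Tendsto f atTop atTop := by
  obtain ⟨b, hb⟩ := eventually_atTop.1 ((hf'.eventually_ge_atTop 1).and (eventually_ge_atTop a))
  have hmono : MonotoneOn (fun x => f x - x) (Ici b) :=
    monotoneOn_Ici_of_hasDerivAt_nonneg_s2 (f' := fun x => f' x - 1)
      (fun x hx => (hf x (hb x hx).2).sub (hasDerivAt_id x))
      (fun x hx => sub_nonneg.2 (hb x hx).1)
  refine tendsto_atTop_mono' atTop ?_ (tendsto_atTop_add_const_left _ (f b - b) tendsto_id)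
  filter_upwards [eventually_ge_atTop b] with x hx
  have := hmono self_mem_Ici hx hx
  simp only [id] at this ⊢
  linarith

theorem deriv_plus_delta_nonpos_general
    (δ a : ℝ) (hδ : 0 < δ) (f f' f'' : ℝ → ℝ)
    (hf' : ∀ s, a ≤ s → HasDerivAt f (f' s) s)
    (hf'' : ∀ s, a ≤ s → HasDerivAt f' (f'' s) s)
    (hbdd : ∃ M : ℝ, ∀ s, a ≤ s → f s ≤ M)
    (hineq : ∀ s, a ≤ s → δ ^ 2 * f s ≤ f'' s) :
    ∀ s, a ≤ s → f' s + δ * f s ≤ 0 := by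
  obtain ⟨M, hM⟩ := hbdd
  intro s₀ hs₀
  by_contra! hpos
  have hg : ∀ s, s₀ ≤ s → HasDerivAt (fun s => f' s + δ * f s) (f'' s + δ * f' s) s :=
    fun s hs => (hf'' s (hs₀.trans hs)).add ((hf' s (hs₀.trans hs)).const_mul δ)
  have hg_top : Tendsto (fun s => f' s + δ * f s) atTop atTop :=
    tendsto_atTop_of_mul_le_deriv hδ hpos hg fun s hs => by
      nlinarith [hineq s (hs₀.trans hs)]
  have hf'_top : Tendsto f' atTop atTop := by
    refine tendsto_atTop_mono' atTop ?_ (tendsto_atTop_add_const_right _ (-(δ * M)) hg_top)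
    filter_upwards [eventually_ge_atTop a] with s hs
    nlinarith [hM s hs]
  obtain ⟨s, hMs, has⟩ := ((tendsto_atTop_of_tendsto_deriv hf' hf'_top).eventually_gt_atTop M
    |>.and (eventually_ge_atTop a)).exists
  linarith [hM s has]

/-- If `f` is twice differentiable on `[a,∞)`, nonnegative and bounded above there,
and satisfies `f'' ≥ δ² f`, then `f' s + δ f s ≤ 0` for every `s ≥ a`. -/
theorem deriv_plus_delta_nonpos
    (δ a : ℝ) (hδ : 0 < δ) (f f' f'' : ℝ → ℝ)
    (hf' : ∀ s, a ≤ s → HasDerivAt f (f' s) s)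
    (hf'' : ∀ s, a ≤ s → HasDerivAt f' (f'' s) s)
    (hnonneg : ∀ s, a ≤ s → 0 ≤ f s)
    (hbdd : ∃ M : ℝ, ∀ s, a ≤ s → f s ≤ M)
    (hineq : ∀ s, a ≤ s → δ ^ 2 * f s ≤ f'' s) :
    ∀ s, a ≤ s → f' s + δ * f s ≤ 0 :=
  deriv_plus_delta_nonpos_general δ a hδ f f' f'' hf' hf'' hbdd hineq
end

section
/- Let δ ∈ ℝ, a ∈ ℝ, and let f : ℝ → ℝ be twice differentiable on [a,∞) with f''(s) ≥ δ² f(s) for all s ≥ a. Then the function g : s ↦ exp(−δ s) · (f'(s) + δ f(s)) is monotone nondecreasing on [a,∞). -/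
open Real Set

theorem hasDerivAt_exp_neg_mul_mul_deriv_add {f f' : ℝ → ℝ} {f'' δ s : ℝ}
    (hf : HasDerivAt f (f' s) s) (hf' : HasDerivAt f' f'' s) :
    HasDerivAt (fun t => exp (-δ * t) * (f' t + δ * f t))
      (exp (-δ * s) * (f'' - δ ^ 2 * f s)) s := by
  have hexp : HasDerivAt (fun t => exp (-δ * t)) (exp (-δ * s) * -δ) s := by
    simpa using ((hasDerivAt_id s).const_mul (-δ)).exp
  have hsum : HasDerivAt (fun t => f' t + δ * f t) (f'' + δ * f' s) s :=
    hf'.add (hf.const_mul δ)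
  exact (hexp.mul hsum).congr_deriv (by ring)

theorem monotoneOn_Ici_of_hasDerivAt_nonneg_s3 {g g' : ℝ → ℝ} {a : ℝ}
    (hg : ∀ s, a ≤ s → HasDerivAt g (g' s) s) (hg' : ∀ s, a ≤ s → 0 ≤ g' s) :
    MonotoneOn g (Ici a) := by
  refine monotoneOn_of_hasDerivWithinAt_nonneg (f' := g') (convex_Ici a)
    (fun s hs => (hg s hs).continuousAt.continuousWithinAt) (fun s hs => ?_) (fun s hs => ?_)
  · rw [interior_Ici] at hs
    exact (hg s (le_of_lt hs)).hasDerivWithinAt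
  · rw [interior_Ici] at hs
    exact hg' s (le_of_lt hs)

/-- If `f` is twice differentiable on `[a,∞)` with `f'' ≥ δ² f` there, then
`s ↦ exp (-δ s) * (f' s + δ f s)` is monotone nondecreasing on `[a,∞)`. -/
theorem monotoneOn_exp_mul_deriv_add
    (δ a : ℝ) (f f' f'' : ℝ → ℝ)
    (hf' : ∀ s, a ≤ s → HasDerivAt f (f' s) s)
    (hf'' : ∀ s, a ≤ s → HasDerivAt f' (f'' s) s)
    (hineq : ∀ s, a ≤ s → δ ^ 2 * f s ≤ f'' s) :
    MonotoneOn (fun s => Real.exp (-δ * s) * (f' s + δ * f s)) (Set.Ici a) := by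
  exact monotoneOn_Ici_of_hasDerivAt_nonneg_s3
    (fun s hs => hasDerivAt_exp_neg_mul_mul_deriv_add (hf' s hs) (hf'' s hs))
    (fun s hs => mul_nonneg (exp_nonneg _) (sub_nonneg.2 (hineq s hs)))
end
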